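/- If Z^a and Z^b are n×n sectorial matrices with phases in [α, β] (β − α < π), then Z^a + Z^b is invertible and the parallel connection Z^c = (Z^{a,−1} + Z^{b,−1})⁻¹ = Z^a (Z^a + Z^b)⁻¹ Z^b is sectorial with phases in [α, β]. -/

import Mathlib

open Matrix Complex

noncomputable section

/-- The numerical range of a complex square matrix. -/
def numRange {ι : Type*} [Fintype ι] (C : Matrix ι ι ℂ) : Set ℂ :=
  {z | ∃ x : ι → ℂ, star x ⬝ᵥ x = 1 ∧ star x ⬝ᵥ C.mulVec x = z}

/-- A matrix is sectorial if its numerical range does not contain 0. -/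
def Sectorial {ι : Type*} [Fintype ι] (C : Matrix ι ι ℂ) : Prop :=
  (0 : ℂ) ∉ numRange C

/-- `PhasesIn C α β` : `C` admits a sectorial decomposition `C = Tᴴ D T` with `T`
invertible and `D` diagonal unitary whose diagonal entries have arguments in `[α, β]`. -/
def PhasesIn {ι : Type*} [Fintype ι] [DecidableEq ι] (C : Matrix ι ι ℂ) (α β : ℝ) : Prop :=
  ∃ T D : Matrix ι ι ℂ, IsUnit T ∧ D.IsDiag ∧ C = Tᴴ * D * T ∧
    ∀ i, ∃ θ : ℝ, α ≤ θ ∧ θ ≤ β ∧ D i i = Complex.exp ((θ : ℂ) * Complex.I)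

/-- `C ∈ Z[α, β]` : sectorial with all phases in `[α, β]`. -/
def MemZ {ι : Type*} [Fintype ι] [DecidableEq ι] (C : Matrix ι ι ℂ) (α β : ℝ) : Prop :=
  Sectorial C ∧ PhasesIn C α β

/-- The closed sector `{r e^{jθ} : r ≥ 0, α ≤ θ ≤ β}` in the complex plane. -/
def sector (α β : ℝ) : Set ℂ :=
  {z | ∃ r θ : ℝ, 0 ≤ r ∧ α ≤ θ ∧ θ ≤ β ∧ z = (r : ℂ) * Complex.exp ((θ : ℂ) * Complex.I)}

/-!
If `C = Tᴴ diag(e^{iθⱼ}) T` with `θⱼ ∈ [α, β]`, then `xᴴ C x = ∑ |(T x)ⱼ|² e^{iθⱼ}`, so for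
`β - α < π` the quadratic form of `C` maps into the sector `[α, β]` and vanishes only at `0`.
Conversely such a quadratic form forces a decomposition of that kind: rotating by the bisector `φ`,
`e^{-iφ} C = A + iB` with `A` positive definite, a simultaneous congruence turns `A + iB` into
`diag(1 + iμⱼ)`, and testing the form on the columns of the inverse congruence locates the phases
`φ + arg(1 + iμⱼ)` in `[α, β]`. Sectors are convex cones, so `Za + Zb` again has such a form and
is therefore invertible. Decompositions `Tᴴ diag(e^{iθⱼ}) T` invert to ones with phases `-θⱼ`,
so `Za⁻¹ + Zb⁻¹` has phases in `[-β, -α]` and its inverse `Za (Za + Zb)⁻¹ Zb` has phases in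
`[α, β]`.
-/

open scoped ComplexOrder ComplexStarModule
open ComplexConjugate

lemma Real.nonneg_of_sin_nonneg {x : ℝ} (hx : -Real.pi < x) (hsin : 0 ≤ Real.sin x) : 0 ≤ x := by
  by_contra! h
  exact (Real.sin_neg_of_neg_of_neg_pi_lt h hx).not_ge hsin

lemma exp_neg_mul_exp_mul_I (ψ θ : ℝ) :
    exp (-(ψ : ℂ) * I) * exp (θ * I) = exp ((θ - ψ : ℝ) * I) := by
  rw [← Complex.exp_add]
  push_cast
  ring_nf

lemma Matrix.inv_inv_add_inv {n R : Type*} [Fintype n] [DecidableEq n] [CommRing R]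
    {A B : Matrix n n R} (hA : IsUnit A) (hB : IsUnit B) :
    (A⁻¹ + B⁻¹)⁻¹ = A * (A + B)⁻¹ * B := by
  have hAd := (isUnit_iff_isUnit_det A).1 hA
  have hBd := (isUnit_iff_isUnit_det B).1 hB
  have hsum : A⁻¹ + B⁻¹ = B⁻¹ * (A + B) * A⁻¹ := by
    rw [Matrix.mul_add, Matrix.add_mul, Matrix.mul_assoc, mul_nonsing_inv A hAd, Matrix.mul_one,
      nonsing_inv_mul B hBd, Matrix.one_mul, add_comm]
  rw [hsum, Matrix.mul_inv_rev, Matrix.mul_inv_rev, nonsing_inv_nonsing_inv A hAd,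
    nonsing_inv_nonsing_inv B hBd, Matrix.mul_assoc]

lemma Matrix.isUnit_of_dotProduct_mulVec_ne_zero {n K : Type*} [Fintype n] [DecidableEq n]
    [Field K] [StarRing K] {C : Matrix n n K}
    (h : ∀ x : n → K, x ≠ 0 → star x ⬝ᵥ C *ᵥ x ≠ 0) : IsUnit C := by
  rw [isUnit_iff_isUnit_det, isUnit_iff_ne_zero]
  intro hdet
  obtain ⟨v, hv, hCv⟩ := exists_mulVec_eq_zero_iff.mpr hdet
  exact h v hv (by rw [hCv, dotProduct_zero])

variable {ι : Type*} [Fintype ι]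

lemma dotProduct_mulVec_conjTranspose (M : Matrix ι ι ℂ) (x : ι → ℂ) :
    star x ⬝ᵥ Mᴴ *ᵥ x = conj (star x ⬝ᵥ M *ᵥ x) := by
  rw [mulVec_conjTranspose, dotProduct_star, star_star, dotProduct_mulVec]
  rfl

lemma dotProduct_mulVec_realPart (M : Matrix ι ι ℂ) (x : ι → ℂ) :
    star x ⬝ᵥ (ℜ M : Matrix ι ι ℂ) *ᵥ x = (star x ⬝ᵥ M *ᵥ x).re := by
  rw [realPart_apply_coe, smul_mulVec, dotProduct_smul, add_mulVec, dotProduct_add,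
    star_eq_conjTranspose, dotProduct_mulVec_conjTranspose, add_conj]
  simp

/-- For `0 ≤ β - α < π` this says that the quadratic form `x ↦ xᴴ C x` takes its values in
`sector α β` and vanishes only at `x = 0`. -/
structure QuadFormInSector (C : Matrix ι ι ℂ) (α β : ℝ) : Prop where
  im_nonneg : ∀ x, 0 ≤ (exp (-(α : ℂ) * I) * (star x ⬝ᵥ C *ᵥ x)).im
  im_nonpos : ∀ x, (exp (-(β : ℂ) * I) * (star x ⬝ᵥ C *ᵥ x)).im ≤ 0
  re_pos : ∀ x, x ≠ 0 → 0 < (exp (-(((α + β) / 2 : ℝ) : ℂ) * I) * (star x ⬝ᵥ C *ᵥ x)).re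

namespace QuadFormInSector

variable {C D : Matrix ι ι ℂ} {α β : ℝ}

lemma add (hC : QuadFormInSector C α β) (hD : QuadFormInSector D α β) :
    QuadFormInSector (C + D) α β where
  im_nonneg x := by
    simpa [add_mulVec, mul_add] using add_nonneg (hC.im_nonneg x) (hD.im_nonneg x)
  im_nonpos x := by
    simpa [add_mulVec, mul_add] using add_nonpos (hC.im_nonpos x) (hD.im_nonpos x)
  re_pos x hx := by
    simpa [add_mulVec, mul_add] using add_pos (hC.re_pos x hx) (hD.re_pos x hx)

lemma dotProduct_mulVec_ne_zero (h : QuadFormInSector C α β) {x : ι → ℂ} (hx : x ≠ 0) :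
    star x ⬝ᵥ C *ᵥ x ≠ 0 := by
  intro h0
  simpa [h0] using h.re_pos x hx

lemma sectorial (h : QuadFormInSector C α β) : Sectorial C := by
  rintro ⟨x, hx, hCx⟩
  refine h.dotProduct_mulVec_ne_zero (fun h0 => ?_) hCx
  simp [h0] at hx

lemma isUnit [DecidableEq ι] (h : QuadFormInSector C α β) : IsUnit C :=
  isUnit_of_dotProduct_mulVec_ne_zero fun _ hx => h.dotProduct_mulVec_ne_zero hx

end QuadFormInSector

variable [DecidableEq ι]

lemma dotProduct_mulVec_conjTranspose_mul_diagonal_mul (T : Matrix ι ι ℂ) (d x : ι → ℂ) :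
    star x ⬝ᵥ (Tᴴ * diagonal d * T) *ᵥ x = ∑ i, (normSq ((T *ᵥ x) i) : ℂ) * d i := by
  rw [← mulVec_mulVec, ← mulVec_mulVec, dotProduct_mulVec, ← star_mulVec]
  simp only [dotProduct, mulVec_diagonal, Pi.star_apply, RCLike.star_def, normSq_eq_conj_mul_self]
  exact Finset.sum_congr rfl fun i _ => by ring

lemma phasesIn_iff {C : Matrix ι ι ℂ} {α β : ℝ} :
    PhasesIn C α β ↔ ∃ (T : Matrix ι ι ℂ) (θ : ι → ℝ), IsUnit T ∧
      C = Tᴴ * diagonal (fun i => exp (θ i * I)) * T ∧ ∀ i, θ i ∈ Set.Icc α β := by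
  constructor
  · rintro ⟨T, D, hT, hD, rfl, hθ⟩
    choose θ hαθ hθβ hDθ using hθ
    refine ⟨T, θ, hT, ?_, fun i => ⟨hαθ i, hθβ i⟩⟩
    rw [← hD.diagonal_diag]
    exact congrArg (fun d => Tᴴ * diagonal d * T) (funext hDθ)
  · rintro ⟨T, θ, hT, rfl, hθ⟩
    exact ⟨T, _, hT, isDiag_diagonal _, rfl,
      fun i => ⟨θ i, (hθ i).1, (hθ i).2, diagonal_apply_eq _ _⟩⟩

lemma phasesIn_of_isEmpty [IsEmpty ι] (C : Matrix ι ι ℂ) (α β : ℝ) : PhasesIn C α β :=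
  phasesIn_iff.2 ⟨1, isEmptyElim, isUnit_one, Subsingleton.elim _ _, isEmptyElim⟩

namespace PhasesIn

variable {C : Matrix ι ι ℂ} {α β : ℝ}

lemma le [Nonempty ι] (h : PhasesIn C α β) : α ≤ β := by
  obtain ⟨-, θ, -, -, hθ⟩ := phasesIn_iff.1 h
  exact (hθ (Classical.arbitrary ι)).1.trans (hθ _).2

lemma isUnit (h : PhasesIn C α β) : IsUnit C := by
  obtain ⟨T, θ, hT, rfl, -⟩ := phasesIn_iff.1 h
  have hD : IsUnit (diagonal fun i => exp (θ i * I)) :=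
    isUnit_diagonal.2 (Pi.isUnit_iff.2 fun i => (Complex.exp_ne_zero _).isUnit)
  exact (((isUnit_conjTranspose _).2 hT).mul hD).mul hT

lemma inv (h : PhasesIn C α β) : PhasesIn C⁻¹ (-β) (-α) := by
  obtain ⟨T, θ, hT, rfl, hθ⟩ := phasesIn_iff.1 h
  have hD : (diagonal fun i => exp (θ i * I))⁻¹ = diagonal fun i => exp ((-θ i : ℝ) * I) := by
    refine inv_eq_left_inv ?_
    rw [diagonal_mul_diagonal, ← diagonal_one]
    congr with i
    rw [← Complex.exp_add]
    simp
  refine phasesIn_iff.2 ⟨(Tᴴ)⁻¹, fun i => -θ i,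
    isUnit_nonsing_inv_iff.2 ((isUnit_conjTranspose _).2 hT), ?_,
    fun i => ⟨neg_le_neg (hθ i).2, neg_le_neg (hθ i).1⟩⟩
  rw [Matrix.mul_inv_rev, Matrix.mul_inv_rev, conjTranspose_nonsing_inv,
    conjTranspose_conjTranspose, hD, Matrix.mul_assoc]

lemma quadFormInSector (h : PhasesIn C α β) (hs : β - α < Real.pi) :
    QuadFormInSector C α β := by
  obtain ⟨T, θ, hT, rfl, hθ⟩ := phasesIn_iff.1 h
  have hq : ∀ (ψ : ℝ) x,
      exp (-(ψ : ℂ) * I) * (star x ⬝ᵥ (Tᴴ * diagonal (fun i => exp (θ i * I)) * T) *ᵥ x)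
        = ∑ i, (normSq ((T *ᵥ x) i) : ℂ) * exp ((θ i - ψ : ℝ) * I) := fun ψ x => by
    rw [dotProduct_mulVec_conjTranspose_mul_diagonal_mul, Finset.mul_sum]
    simp only [mul_left_comm _ (normSq _ : ℂ), exp_neg_mul_exp_mul_I]
  refine ⟨fun x => ?_, fun x => ?_, fun x hx => ?_⟩ <;>
    simp only [hq, Complex.im_sum, Complex.re_sum, im_ofReal_mul, re_ofReal_mul,
      exp_ofReal_mul_I_im, exp_ofReal_mul_I_re]
  · exact Finset.sum_nonneg fun i _ => mul_nonneg (normSq_nonneg _) <|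
      Real.sin_nonneg_of_nonneg_of_le_pi (by linarith [(hθ i).1])
        (by linarith [(hθ i).1, (hθ i).2])
  · exact Finset.sum_nonpos fun i _ => mul_nonpos_of_nonneg_of_nonpos (normSq_nonneg _) <|
      Real.sin_nonpos_of_nonpos_of_neg_pi_le (by linarith [(hθ i).2])
        (by linarith [(hθ i).1, (hθ i).2])
  · obtain ⟨j, hj⟩ : ∃ j, (T *ᵥ x) j ≠ 0 := Function.ne_iff.1 fun h0 =>
      hx (mulVec_injective_iff_isUnit.2 hT (h0.trans (mulVec_zero T).symm))
    have hcos : ∀ i, 0 < Real.cos (θ i - (α + β) / 2) := fun i =>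
      Real.cos_pos_of_mem_Ioo ⟨by linarith [(hθ i).1, (hθ i).2], by linarith [(hθ i).1, (hθ i).2]⟩
    exact Finset.sum_pos' (fun i _ => mul_nonneg (normSq_nonneg _) (hcos i).le)
      ⟨j, Finset.mem_univ j, mul_pos (normSq_pos.2 hj) (hcos j)⟩

end PhasesIn

open scoped MatrixOrder in
lemma Matrix.PosDef.exists_eq_conjTranspose_mul_self_and_diagonal {A B : Matrix ι ι ℂ}
    (hA : A.PosDef) (hB : B.IsHermitian) :
    ∃ (T : Matrix ι ι ℂ) (μ : ι → ℝ), IsUnit T ∧ A = Tᴴ * T ∧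
      B = Tᴴ * diagonal (fun i => (μ i : ℂ)) * T := by
  obtain ⟨R, hR, rfl⟩ :=
    CStarAlgebra.isStrictlyPositive_iff_eq_star_mul_self.1 (isStrictlyPositive_iff_posDef.2 hA)
  have hRR : R⁻¹ * R = 1 := nonsing_inv_mul R ((isUnit_iff_isUnit_det R).1 hR)
  have hS : ((R⁻¹)ᴴ * B * R⁻¹).IsHermitian := by
    simp only [IsHermitian, conjTranspose_mul, conjTranspose_conjTranspose, hB.eq,
      Matrix.mul_assoc]
  obtain ⟨V, μ, hV, hspec⟩ : ∃ (V : Matrix ι ι ℂ) (μ : ι → ℝ), V ∈ unitaryGroup ι ℂ ∧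
      (R⁻¹)ᴴ * B * R⁻¹ = V * diagonal (fun i => (μ i : ℂ)) * Vᴴ :=
    ⟨_, _, hS.eigenvectorUnitary.2, hS.spectral_theorem⟩
  have hVV : V * Vᴴ = 1 := Unitary.mul_star_self_of_mem hV
  refine ⟨Vᴴ * R, μ, (Unitary.isUnit_coe (U := ⟨V, hV⟩)).star.mul hR, ?_, ?_⟩
  · rw [conjTranspose_mul, conjTranspose_conjTranspose, Matrix.mul_assoc, ← Matrix.mul_assoc V,
      hVV, Matrix.one_mul, star_eq_conjTranspose]
  · calc B = (R⁻¹ * R)ᴴ * B * (R⁻¹ * R) := by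
          rw [hRR, conjTranspose_one, Matrix.one_mul, Matrix.mul_one]
      _ = Rᴴ * ((R⁻¹)ᴴ * B * R⁻¹) * R := by simp only [conjTranspose_mul, Matrix.mul_assoc]
      _ = _ := by
          rw [hspec, conjTranspose_mul, conjTranspose_conjTranspose]
          simp only [Matrix.mul_assoc]

lemma exists_conjTranspose_mul_diagonal_mul_eq_exp_arg {T : Matrix ι ι ℂ} (hT : IsUnit T)
    {d : ι → ℂ} (hd : ∀ i, d i ≠ 0) :
    ∃ S : Matrix ι ι ℂ, IsUnit S ∧
      Tᴴ * diagonal d * T = Sᴴ * diagonal (fun i => exp (arg (d i) * I)) * S := by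
  have hsqrt : ∀ i, (√‖d i‖ : ℂ) * exp (arg (d i) * I) * √‖d i‖ = d i := fun i => by
    rw [mul_right_comm, ← ofReal_mul, Real.mul_self_sqrt (norm_nonneg _),
      norm_mul_exp_arg_mul_I]
  refine ⟨diagonal (fun i => (√‖d i‖ : ℂ)) * T, ?_, ?_⟩
  · refine (isUnit_diagonal.2 (Pi.isUnit_iff.2 fun i => ?_)).mul hT
    exact (ofReal_ne_zero.2 (Real.sqrt_ne_zero'.2 (norm_pos_iff.2 (hd i)))).isUnit
  · rw [conjTranspose_mul, diagonal_conjTranspose]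
    simp only [Matrix.mul_assoc, ← Matrix.mul_assoc (diagonal _), diagonal_mul_diagonal]
    simp [conj_ofReal, hsqrt]

namespace QuadFormInSector

variable {C : Matrix ι ι ℂ} {α β : ℝ}

lemma mem_Icc {T : Matrix ι ι ℂ} {θ : ι → ℝ}
    (h : QuadFormInSector (Tᴴ * diagonal (fun i => exp (θ i * I)) * T) α β) (hT : IsUnit T)
    (j : ι) (hlo : α - Real.pi < θ j) (hhi : θ j < β + Real.pi) : θ j ∈ Set.Icc α β := by
  set x := T⁻¹ *ᵥ Pi.single j 1
  have hx : star x ⬝ᵥ (Tᴴ * diagonal (fun i => exp (θ i * I)) * T) *ᵥ x = exp (θ j * I) := by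
    rw [dotProduct_mulVec_conjTranspose_mul_diagonal_mul, mulVec_mulVec,
      mul_nonsing_inv T ((isUnit_iff_isUnit_det T).1 hT), one_mulVec]
    simp [Pi.single_apply, apply_ite, ite_mul]
  have hlow := h.im_nonneg x
  have hhigh := h.im_nonpos x
  rw [hx, exp_neg_mul_exp_mul_I, exp_ofReal_mul_I_im] at hlow hhigh
  constructor
  · linarith [Real.nonneg_of_sin_nonneg (x := θ j - α) (by linarith) hlow]
  · have := Real.nonneg_of_sin_nonneg (x := β - θ j) (by linarith)
      (by rw [← neg_sub, Real.sin_neg]; linarith)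
    linarith

lemma phasesIn (h : QuadFormInSector C α β) (hab : α ≤ β) :
    PhasesIn C α β := by
  set φ : ℝ := (α + β) / 2
  set C' := exp (-(φ : ℂ) * I) • C
  have hA : (ℜ C' : Matrix ι ι ℂ).PosDef :=
    .of_dotProduct_mulVec_pos (ℜ C').2 fun x hx => by
      rw [dotProduct_mulVec_realPart, smul_mulVec, dotProduct_smul, smul_eq_mul]
      exact_mod_cast h.re_pos x hx
  obtain ⟨T, μ, hT, hre, him⟩ := hA.exists_eq_conjTranspose_mul_self_and_diagonal (ℑ C').2
  have hre_pos : ∀ i, 0 < (1 + μ i * I).re := fun i => by simp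
  obtain ⟨S, hS, hTS⟩ := exists_conjTranspose_mul_diagonal_mul_eq_exp_arg hT
    (d := fun i => 1 + μ i * I) fun i h0 => (hre_pos i).ne' (by rw [h0, zero_re])
  set θ : ι → ℝ := fun i => φ + arg (1 + μ i * I)
  have hC : C = Sᴴ * diagonal (fun i => exp (θ i * I)) * S := by
    calc C = exp ((φ : ℂ) * I) • (ℜ C' + I • ℑ C' : Matrix ι ι ℂ) := by
          rw [realPart_add_I_smul_imaginaryPart, smul_smul, ← Complex.exp_add]
          simp
      _ = exp ((φ : ℂ) * I) • (Tᴴ * diagonal (fun i => 1 + μ i * I) * T) := by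
          have hdiag : diagonal (fun i => 1 + μ i * I) = 1 + I • diagonal (fun i => (μ i : ℂ)) := by
            rw [← diagonal_one, ← diagonal_smul, diagonal_add]
            congr with i
            simp [mul_comm]
          rw [hre, him, hdiag]
          simp only [Matrix.mul_add, Matrix.add_mul, Matrix.mul_one, Matrix.mul_smul,
            Matrix.smul_mul]
      _ = _ := by
          rw [hTS, ← Matrix.smul_mul, ← Matrix.mul_smul, ← diagonal_smul]
          congr with i
          simp only [Pi.smul_apply, smul_eq_mul, θ, ← Complex.exp_add]
          push_cast
          ring_nf
  have harg : ∀ i, |arg (1 + μ i * I)| < Real.pi / 2 := fun i =>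
    abs_arg_lt_pi_div_two_iff.2 (Or.inl (hre_pos i))
  refine phasesIn_iff.2 ⟨S, θ, hS, hC, fun j => (hC ▸ h).mem_Icc hS j ?_ ?_⟩ <;>
    · dsimp only [θ, φ]
      linarith [abs_lt.1 (harg j)]

end QuadFormInSector

theorem parallel_connection_preserves_phases {n : ℕ}
    (Za Zb : Matrix (Fin n) (Fin n) ℂ) (α β : ℝ)
    (hαβ : β - α < Real.pi) (ha : MemZ Za α β) (hb : MemZ Zb α β) :
    IsUnit (Za + Zb) ∧ (Za⁻¹ + Zb⁻¹)⁻¹ = Za * (Za + Zb)⁻¹ * Zb ∧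
      MemZ (Za * (Za + Zb)⁻¹ * Zb) α β := by
  obtain ⟨-, haPh⟩ := ha
  obtain ⟨-, hbPh⟩ := hb
  have hpar := inv_inv_add_inv haPh.isUnit hbPh.isUnit
  have hs : -α - -β < Real.pi := by linarith
  have hinv : PhasesIn (Za⁻¹ + Zb⁻¹) (-β) (-α) := by
    rcases isEmpty_or_nonempty (Fin n) with _ | _
    · exact phasesIn_of_isEmpty _ _ _
    · exact ((haPh.inv.quadFormInSector hs).add (hbPh.inv.quadFormInSector hs)).phasesIn
        (neg_le_neg haPh.le)
  have hZc : PhasesIn (Za * (Za + Zb)⁻¹ * Zb) α β := by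
    simpa only [hpar, neg_neg] using hinv.inv
  exact ⟨((haPh.quadFormInSector hαβ).add (hbPh.quadFormInSector hαβ)).isUnit, hpar,
    (hZc.quadFormInSector hαβ).sectorial, hZc⟩
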